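/- arXiv:2504.01759 — 7 statements merged into one kernel-verified Lean document; each statement's English description precedes it below -/
import Mathlib

section
/- For every α with 0 < α < 1/M, the mapping F is a contraction on the non-positive orthant (−∞,0]^N with respect to the sup norm: there exists a constant c with 0 ≤ c < 1 such that ‖F(x) − F(y)‖_∞ ≤ c·‖x − y‖_∞ for all x, y ∈ ℝ^N with all components non-positive. -/
/-- The αβ-HMM log-belief-ratio mapping `F`, defined componentwise for `m = 1, …, M-1` by
`F_m(x) = log(((1 - αM)·exp(x_m) + α + α·Σ_n exp(x_n)) / (1 - αM + α + α·Σ_n exp(x_n)))`. -/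
noncomputable def abHMM.F (α : ℝ) (M : ℕ) (x : Fin (M - 1) → ℝ) : Fin (M - 1) → ℝ :=
  fun m => Real.log (((1 - α * M) * Real.exp (x m) + α + α * ∑ n, Real.exp (x n)) /
    (1 - α * M + α + α * ∑ n, Real.exp (x n)))

/-!
With `β = 1 - αM` and `S(x) = ∑ₙ exp xₙ`, each component is
`Fₘ(x) = log (β exp xₘ + α + α S(x)) - log (β + α + α S(x))`.
Along a segment in the non-positive orthant, `exp xₙ ≤ 1` gives `β + α + α S ≤ 1`, and the
derivative of `Fₘ` is bounded by `(1 - α)` times the sup norm of the direction; the mean value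
theorem then makes `F` a `(1 - α)`-contraction.
-/

open Real Finset Set

namespace abHMM

variable {ι : Type*} [Fintype ι] {α β : ℝ}

noncomputable def logRatio (α β : ℝ) (x : ι → ℝ) (m : ι) : ℝ :=
  log (β * exp (x m) + α + α * ∑ n, exp (x n)) - log (β + α + α * ∑ n, exp (x n))

theorem F_eq_logRatio {M : ℕ} (hα : 0 < α) (hαM : α * M < 1) (x : Fin (M - 1) → ℝ) :
    F α M x = logRatio α (1 - α * M) x := by
  have hβ : 0 ≤ 1 - α * M := by linarith
  funext m
  exact log_div (by positivity) (by positivity)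

theorem sum_exp_le_card {x : ι → ℝ} (hx : ∀ n, x n ≤ 0) : ∑ n, exp (x n) ≤ Fintype.card ι :=
  (sum_le_sum fun n _ => exp_le_one_iff.mpr (hx n)).trans_eq (by simp)

/-- `(β e d + α P) / A - α P / B` is the derivative of `log A - log B` with `A = β e + α + α S`,
`B = β + α + α S`, when `e = exp a`, `a' = d` and `S' = P`. -/
theorem abs_logRatio_deriv_le {t e S d P : ℝ} (hα : 0 < α) (hβ : 0 ≤ β) (he : 0 < e) (he₁ : e ≤ 1)
    (hS : 0 ≤ S) (hd : |d| ≤ t) (hP : |P| ≤ t * S) (hB₁ : β + α + α * S ≤ 1) :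
    |(β * (e * d) + α * P) / (β * e + α + α * S) - α * P / (β + α + α * S)| ≤ (1 - α) * t := by
  set A := β * e + α + α * S
  set B := β + α + α * S
  have hA : 0 < A := by positivity
  have hAB : A ≤ B := by have := mul_le_mul_of_nonneg_left he₁ hβ; linarith
  have hinv : 0 ≤ 1 / A - 1 / B := sub_nonneg.mpr (one_div_le_one_div_of_le hA hAB)
  -- the weights `β e / A` and `α S (1/A - 1/B)` are nonnegative and sum to `(β + α)/B - α/A`
  calc |(β * (e * d) + α * P) / A - α * P / B|
      = |β * e / A * d + α * (1 / A - 1 / B) * P| := by congr 1; field_simp; ring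
    _ ≤ β * e / A * t + α * (1 / A - 1 / B) * (t * S) := by
        refine (abs_add_le _ _).trans (add_le_add ?_ ?_) <;>
          rw [abs_mul, abs_of_nonneg (by positivity)] <;> gcongr
    _ = t * ((β + α) / B - α / A) := by simp only [A, B]; field_simp; ring
    _ ≤ t * (1 - α) := by
        have hB : (β + α) / B ≤ 1 := (div_le_one (by positivity)).mpr (by nlinarith)
        have hA₁ : α ≤ α / A := (le_div_iff₀ hA).mpr (by nlinarith)
        gcongr
        exact (abs_nonneg d).trans hd
    _ = (1 - α) * t := mul_comm _ _

theorem hasDerivAt_logRatio {p : ℝ → ι → ℝ} {p' : ι → ℝ} {s : ℝ}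
    (hp : ∀ n, HasDerivAt (fun s => p s n) (p' n) s) (hα : 0 < α) (hβ : 0 ≤ β) (m : ι) :
    HasDerivAt (fun s => logRatio α β (p s) m)
      ((β * (exp (p s m) * p' m) + α * ∑ n, exp (p s n) * p' n) /
          (β * exp (p s m) + α + α * ∑ n, exp (p s n)) -
        α * (∑ n, exp (p s n) * p' n) / (β + α + α * ∑ n, exp (p s n))) s := by
  have hS : HasDerivAt (fun s => ∑ n, exp (p s n)) (∑ n, exp (p s n) * p' n) s :=
    HasDerivAt.fun_sum fun n _ => (hp n).exp
  have hA_pos : 0 < β * exp (p s m) + α + α * ∑ n, exp (p s n) := by positivity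
  have hB_pos : 0 < β + α + α * ∑ n, exp (p s n) := by positivity
  have hA := ((((hp m).exp.const_mul β).add_const α).add (hS.const_mul α)).log hA_pos.ne'
  have hB := ((hS.const_mul α).const_add (β + α)).log hB_pos.ne'
  exact hA.sub hB

theorem abs_logRatio_sub_le (hα : 0 < α) (hβ : 0 ≤ β) (hcard : β + α + α * Fintype.card ι ≤ 1)
    {x y : ι → ℝ} (hx : ∀ n, x n ≤ 0) (hy : ∀ n, y n ≤ 0) (m : ι) :
    |logRatio α β x m - logRatio α β y m| ≤ (1 - α) * ‖x - y‖ := by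
  set p : ℝ → ι → ℝ := fun s n => y n + s * (x n - y n)
  have hp : ∀ s n, HasDerivAt (fun s => p s n) (x n - y n) s := fun s n =>
    (((hasDerivAt_id s).mul_const (x n - y n)).const_add (y n)).congr_deriv (one_mul _)
  have hp_nonpos : ∀ s ∈ Icc (0 : ℝ) 1, ∀ n, p s n ≤ 0 := fun s hs n => by
    nlinarith [mul_nonneg hs.1 (neg_nonneg.2 (hx n)),
      mul_nonneg (sub_nonneg.2 hs.2) (neg_nonneg.2 (hy n))]
  have hdist : ∀ n, |x n - y n| ≤ ‖x - y‖ := fun n => by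
    simpa using norm_le_pi_norm (x - y) n
  refine (le_of_eq ?_).trans (norm_image_sub_le_of_norm_deriv_le_segment_01'
    (f := fun s => logRatio α β (p s) m)
    (fun s _ => (hasDerivAt_logRatio (hp s) hα hβ m).hasDerivWithinAt) fun s hs => ?_)
  · simp [p]
  have hs := Ico_subset_Icc_self hs
  have hS := sum_exp_le_card (hp_nonpos s hs)
  refine abs_logRatio_deriv_le hα hβ (exp_pos _) (exp_le_one_iff.mpr (hp_nonpos s hs m))
    (by positivity) (hdist m) ?_ (by nlinarith)
  calc |∑ n, exp (p s n) * (x n - y n)| ≤ ∑ n, exp (p s n) * ‖x - y‖ :=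
        (abs_sum_le_sum_abs _ _).trans <| sum_le_sum fun n _ => by
          rw [abs_mul, abs_of_pos (exp_pos _)]; gcongr; exact hdist n
    _ = ‖x - y‖ * ∑ n, exp (p s n) := by rw [← sum_mul, mul_comm]

end abHMM

theorem abHMM_contraction_on_nonpositive_orthant_general (M : ℕ) (α : ℝ)
    (hα : 0 < α) (hα' : α < 1 / M) :
    ∃ c : ℝ, 0 ≤ c ∧ c < 1 ∧
      ∀ x y : Fin (M - 1) → ℝ, (∀ m, x m ≤ 0) → (∀ m, y m ≤ 0) →
        ‖abHMM.F α M x - abHMM.F α M y‖ ≤ c * ‖x - y‖ := by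
  have hM : (0 : ℝ) < M := one_div_pos.mp (hα.trans hα')
  have hαM : α * M < 1 := (lt_div_iff₀ hM).mp hα'
  have hα₁ : α ≤ 1 := by nlinarith [Nat.one_le_cast (α := ℝ) |>.mpr (Nat.cast_pos.mp hM)]
  have hcard : 1 - α * M + α + α * Fintype.card (Fin (M - 1)) ≤ 1 := by
    rw [Fintype.card_fin, Nat.cast_sub (Nat.cast_pos.mp hM)]; push_cast; linarith
  refine ⟨1 - α, by linarith, by linarith, fun x y hx hy => ?_⟩
  rw [abHMM.F_eq_logRatio hα hαM, abHMM.F_eq_logRatio hα hαM]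
  refine (pi_norm_le_iff_of_nonneg (by positivity)).mpr fun m => ?_
  exact abHMM.abs_logRatio_sub_le hα (by linarith) hcard hx hy m

/-- for `0 < α < 1/M`, `F` is a contraction on the non-positive orthant
`(-∞,0]^N` with respect to the sup norm (the norm on the Pi type `Fin (M-1) → ℝ`). -/
theorem abHMM_contraction_on_nonpositive_orthant (M : ℕ) (hM : 2 ≤ M) (α : ℝ)
    (hα : 0 < α) (hα' : α < 1 / M) :
    ∃ c : ℝ, 0 ≤ c ∧ c < 1 ∧
      ∀ x y : Fin (M - 1) → ℝ, (∀ m, x m ≤ 0) → (∀ m, y m ≤ 0) →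
        ‖abHMM.F α M x - abHMM.F α M y‖ ≤ c * ‖x - y‖ :=
  abHMM_contraction_on_nonpositive_orthant_general M α hα hα'
end

section
/- Let 0 < α < 1/M, β > 0 and d ∈ ℝ^N with d_m > 0 for all m. If x ∈ ℝ^N is a fixed point of the reference dynamical system, i.e. x = F(x) − β d, then, setting μ₀ = 1/(1 + Σ_{n=1}^N exp(x_n)), each component satisfies x_m = log( α / ( α·exp(β d_m) + (1 − αM)·(exp(β d_m) − 1)·μ₀ ) ). -/
/-!
Writing `a = 1 - αM`, `s = 1 + Σₙ exp xₙ = 1/μ₀` and `D = exp (β dₘ)`, the `m`-th component of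
the fixed-point equation, exponentiated, reads `exp xₘ · D · (a + α s) = a · exp xₘ + α s`.
This is linear in `exp xₘ`, and solving it gives the formula.
-/

open Real

theorem exp_mul_eq_of_eq_log_div_sub {x c N T : ℝ} (hN : 0 < N) (hT : 0 < T)
    (h : x = log (N / T) - c) : exp x * (exp c * T) = N := by
  rw [h, exp_sub, exp_log (div_pos hN hT)]
  field_simp

theorem eq_div_of_mul_mul_add_eq {a α D E s : ℝ} (hα : α ≠ 0) (hs : s ≠ 0)
    (h : E * (D * (a + α * s)) = a * E + α * s) :
    E = α / (α * D + a * (D - 1) * s⁻¹) := by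
  have key : E * (α * D + a * (D - 1) * s⁻¹) = α := by
    field_simp
    linear_combination h
  have hden : α * D + a * (D - 1) * s⁻¹ ≠ 0 := by
    rintro h0
    rw [h0, mul_zero] at key
    exact hα key.symm
  exact (eq_div_iff hden).mpr key

theorem abHMM.F_apply (α : ℝ) (M : ℕ) (x : Fin (M - 1) → ℝ) (m : Fin (M - 1)) :
    F α M x m = log (((1 - α * M) * exp (x m) + α * (1 + ∑ n, exp (x n))) /
      (1 - α * M + α * (1 + ∑ n, exp (x n)))) := by
  simp only [F]
  congr 2 <;> ring

theorem abHMM_fixed_point_formula_general (M : ℕ) (α β : ℝ)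
    (hα : 0 < α) (hα' : α < 1 / M)
    (d : Fin (M - 1) → ℝ)
    (x : Fin (M - 1) → ℝ) (hfix : x = fun m => abHMM.F α M x m - β * d m)
    (μ₀ : ℝ) (hμ₀ : μ₀ = 1 / (1 + ∑ n, Real.exp (x n))) :
    ∀ m, x m = Real.log (α /
      (α * Real.exp (β * d m) + (1 - α * M) * (Real.exp (β * d m) - 1) * μ₀)) := by
  intro m
  have hM : (0 : ℝ) < M := one_div_pos.mp (hα.trans hα')
  have ha : 0 < 1 - α * M := by linarith [(lt_div_iff₀ hM).mp hα']
  have hs : 0 < 1 + ∑ n, exp (x n) := by positivity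
  have hxm := congrFun hfix m
  rw [abHMM.F_apply] at hxm
  have hexp := exp_mul_eq_of_eq_log_div_sub
    (add_pos (mul_pos ha (exp_pos _)) (mul_pos hα hs)) (add_pos ha (mul_pos hα hs)) hxm
  rw [hμ₀, one_div, ← eq_div_of_mul_mul_add_eq hα.ne' hs.ne' hexp, log_exp]

/-- if `x` is a fixed point of the reference dynamical system
`x = F(x) - β d`, then with `μ₀ = 1/(1 + Σ_n exp(x_n))` each component satisfies
`x_m = log(α / (α·exp(β d_m) + (1 - αM)·(exp(β d_m) - 1)·μ₀))`. -/
theorem abHMM_fixed_point_formula (M : ℕ) (hM : 2 ≤ M) (α β : ℝ)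
    (hα : 0 < α) (hα' : α < 1 / M) (hβ : 0 < β)
    (d : Fin (M - 1) → ℝ) (hd : ∀ m, 0 < d m)
    (x : Fin (M - 1) → ℝ) (hfix : x = fun m => abHMM.F α M x m - β * d m)
    (μ₀ : ℝ) (hμ₀ : μ₀ = 1 / (1 + ∑ n, Real.exp (x n))) :
    ∀ m, x m = Real.log (α /
      (α * Real.exp (β * d m) + (1 - α * M) * (Real.exp (β * d m) - 1) * μ₀)) :=
  abHMM_fixed_point_formula_general M α β hα hα' d x hfix μ₀ hμ₀
end

section
/- Let 0 < α < 1/M, β > 0 and d ∈ ℝ^N with d_m > 0 for all m. If x ∈ ℝ^N is a fixed point of the reference dynamical system, i.e. x = F(x) − β d, then x_m < −β d_m < 0 for every m = 1, …, N; in particular every component of the fixed point is strictly negative. -/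
open Real

section WeightedMean

variable {a c y : ℝ}

theorem log_weightedMean_exp_le_self (ha : 0 < a) (hc : 0 ≤ c) (hy : 0 ≤ y) :
    log ((a * exp y + c) / (a + c)) ≤ y := by
  have hac : 0 < a + c := by linarith
  have hmean : a * exp y + c ≤ exp y * (a + c) := by nlinarith [one_le_exp hy]
  calc log ((a * exp y + c) / (a + c)) ≤ log (exp y) :=
        log_le_log (by positivity) ((div_le_iff₀ hac).mpr hmean)
    _ = y := log_exp y

theorem log_weightedMean_exp_neg (ha : 0 < a) (hc : 0 ≤ c) (hy : y < 0) :
    log ((a * exp y + c) / (a + c)) < 0 := by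
  have hac : 0 < a + c := by linarith
  have hmean : a * exp y + c < a + c := by nlinarith [exp_lt_one_iff.mpr hy]
  exact log_neg (by positivity) ((div_lt_one hac).mpr hmean)

end WeightedMean

namespace abHMM

variable {α : ℝ} {M : ℕ}

theorem F_apply_s3 (x : Fin (M - 1) → ℝ) (m : Fin (M - 1)) :
    F α M x m = log (((1 - α * M) * exp (x m) + (α + α * ∑ n, exp (x n))) /
      ((1 - α * M) + (α + α * ∑ n, exp (x n)))) := by
  simp only [F, add_assoc]

theorem weight_nonneg (hα : 0 ≤ α) (x : Fin (M - 1) → ℝ) : 0 ≤ α + α * ∑ n, exp (x n) :=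
  add_nonneg hα (mul_nonneg hα (Finset.sum_nonneg fun n _ => (exp_pos (x n)).le))

theorem F_apply_le_self (hα : 0 ≤ α) (hαM : α * M < 1) {x : Fin (M - 1) → ℝ}
    {m : Fin (M - 1)} (hx : 0 ≤ x m) : F α M x m ≤ x m := by
  rw [F_apply_s3]
  exact log_weightedMean_exp_le_self (by linarith) (weight_nonneg hα x) hx

theorem F_apply_neg (hα : 0 ≤ α) (hαM : α * M < 1) {x : Fin (M - 1) → ℝ}
    {m : Fin (M - 1)} (hx : x m < 0) : F α M x m < 0 := by
  rw [F_apply_s3]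
  exact log_weightedMean_exp_neg (by linarith) (weight_nonneg hα x) hx

end abHMM

theorem abHMM_fixed_point_strictly_negative_general (M : ℕ) (α β : ℝ)
    (hα : 0 < α) (hα' : α < 1 / M) (hβ : 0 < β)
    (d : Fin (M - 1) → ℝ) (hd : ∀ m, 0 < d m)
    (x : Fin (M - 1) → ℝ) (hfix : x = fun m => abHMM.F α M x m - β * d m) :
    ∀ m, x m < -(β * d m) ∧ -(β * d m) < 0 := by
  intro m
  have hM : (0 : ℝ) < M := one_div_pos.mp (hα.trans hα')
  have hαM : α * M < 1 := (lt_div_iff₀ hM).mp (by simpa using hα')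
  have hβd : 0 < β * d m := mul_pos hβ (hd m)
  have hfixm : x m = abHMM.F α M x m - β * d m := congrFun hfix m
  have hxm : x m < 0 := by
    by_contra! hx
    linarith [abHMM.F_apply_le_self hα.le hαM hx]
  exact ⟨by linarith [abHMM.F_apply_neg hα.le hαM hxm], by linarith⟩

/-- any fixed point `x` of the reference dynamical system `x = F(x) - β d`
satisfies `x_m < -β d_m < 0` for every `m`; in particular all its components are
strictly negative. -/
theorem abHMM_fixed_point_strictly_negative (M : ℕ) (hM : 2 ≤ M) (α β : ℝ)
    (hα : 0 < α) (hα' : α < 1 / M) (hβ : 0 < β)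
    (d : Fin (M - 1) → ℝ) (hd : ∀ m, 0 < d m)
    (x : Fin (M - 1) → ℝ) (hfix : x = fun m => abHMM.F α M x m - β * d m) :
    ∀ m, x m < -(β * d m) ∧ -(β * d m) < 0 :=
  abHMM_fixed_point_strictly_negative_general M α β hα hα' hβ d hd x hfix
end

section
/- Let 0 < α < 1/M, β > 0 and d ∈ ℝ^N with d_m > 0 for all m, and let x̂^∞ be the fixed point of the map x ↦ F(x) − β d. Set d̲ = min_{m=1,…,N} d_m, U = max{ 1, exp(x̂_{1,0}), …, exp(x̂_{N,0}) }, and γ = ( (1 − αM)·(1 + 2αU(M−1)) / (1 − αM + α)² )·exp(−β d̲). Then the reference dynamical system satisfies ‖exp(x̂_i) − exp(x̂^∞)‖₁ ≤ γ · ‖exp(x̂_{i−1}) − exp(x̂^∞)‖₁ for every i ≥ 1, where exp is applied componentwise. -/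
/-!
In the coordinates `y = exp x` one step of the reference system is `y ↦ w ⊙ G(y)` with
`w_m = exp (-β d_m) ∈ (0, exp (-β d̲)]` and `G(y)_m = 1 + a (y_m - 1) / (a + α + α Σ y)`,
`a = 1 - αM`, where every denominator is at least `a + α ≤ 1`. Hence `G(y)_m - G(z)_m` splits
into `a (y_m - z_m)` and `a α (y_m - 1)(Σ z - Σ y)`, each divided by at least `(a + α)²`.
Since `G` maps `[0, U]^N` into itself for `U ≥ 1`, the orbit stays below `U`, so
`|y_m - 1| ≤ U`, and summing over `m` gives the factor `exp (-β d̲) · a (1 + α U N) / (a + α)² ≤ γ`.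
-/

namespace abHMM

variable {ι : Type*} [Fintype ι] {a α : ℝ} {y z : ι → ℝ}

noncomputable def G (a α : ℝ) (y : ι → ℝ) (m : ι) : ℝ :=
  (a * y m + α + α * ∑ n, y n) / (a + α + α * ∑ n, y n)

noncomputable def expStep (a α : ℝ) (w y : ι → ℝ) (m : ι) : ℝ :=
  w m * G a α y m

theorem exp_F {M : ℕ} (hα : 0 < α) (ha : 0 ≤ 1 - α * M) (x : Fin (M - 1) → ℝ)
    (m : Fin (M - 1)) :
    Real.exp (F α M x m) = G (1 - α * M) α (fun n => Real.exp (x n)) m := by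
  have hS : 0 ≤ ∑ n, Real.exp (x n) := Finset.sum_nonneg fun n _ => (Real.exp_pos _).le
  have hxm := Real.exp_pos (x m)
  refine Real.exp_log (div_pos ?_ ?_) <;> nlinarith [mul_nonneg ha hxm.le]

theorem exp_of_eq_F_sub {M : ℕ} (hα : 0 < α) (ha : 0 ≤ 1 - α * M)
    {x x' c : Fin (M - 1) → ℝ} (h : x' = fun m => F α M x m - c m) (m : Fin (M - 1)) :
    Real.exp (x' m) =
      expStep (1 - α * M) α (fun n => Real.exp (-c n)) (fun n => Real.exp (x n)) m := by
  rw [congrFun h m, sub_eq_neg_add, Real.exp_add, exp_F hα ha, expStep]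

theorem G_sub_G (hy : a + α + α * ∑ n, y n ≠ 0) (hz : a + α + α * ∑ n, z n ≠ 0) (m : ι) :
    G a α y m - G a α z m = a * (y m - z m) / (a + α + α * ∑ n, z n) +
      a * α * (y m - 1) * (∑ n, z n - ∑ n, y n) /
        ((a + α + α * ∑ n, y n) * (a + α + α * ∑ n, z n)) := by
  unfold G
  field_simp
  ring

theorem abs_G_sub_G_le (ha : 0 ≤ a) (hα : 0 < α) (hc : a + α ≤ 1)
    (hy : ∀ n, 0 ≤ y n) (hz : ∀ n, 0 ≤ z n) (m : ι) :
    |G a α y m - G a α z m| ≤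
      a / (a + α) ^ 2 * (|y m - z m| + α * |y m - 1| * |∑ n, y n - ∑ n, z n|) := by
  have hc0 : 0 < a + α := by positivity
  have hcc : (a + α) ^ 2 ≤ a + α := by nlinarith
  have hDy : a + α ≤ a + α + α * ∑ n, y n := by
    have := Finset.sum_nonneg fun n (_ : n ∈ Finset.univ) => hy n
    nlinarith
  have hDz : a + α ≤ a + α + α * ∑ n, z n := by
    have := Finset.sum_nonneg fun n (_ : n ∈ Finset.univ) => hz n
    nlinarith
  have hDyz : (a + α) ^ 2 ≤ (a + α + α * ∑ n, y n) * (a + α + α * ∑ n, z n) := by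
    rw [sq]; exact mul_le_mul hDy hDz hc0.le (hc0.le.trans hDy)
  have hDy0 := hc0.trans_le hDy
  have hDz0 := hc0.trans_le hDz
  rw [G_sub_G hDy0.ne' hDz0.ne', mul_add (a / (a + α) ^ 2)]
  refine (abs_add_le _ _).trans (add_le_add ?_ ?_)
  · rw [abs_div, abs_mul, abs_of_nonneg ha, abs_of_pos hDz0, div_mul_eq_mul_div]
    exact div_le_div_of_nonneg_left (by positivity) (by positivity) (hcc.trans hDz)
  · rw [abs_div, abs_mul, abs_mul, abs_mul, abs_of_nonneg ha, abs_of_pos hα,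
      abs_of_pos (mul_pos hDy0 hDz0), abs_sub_comm (∑ n, z n)]
    rw [div_mul_eq_mul_div, ← mul_assoc, ← mul_assoc]
    exact div_le_div_of_nonneg_left (by positivity) (by positivity) hDyz

theorem sum_abs_G_sub_G_le (ha : 0 ≤ a) (hα : 0 < α) (hc : a + α ≤ 1) {U : ℝ}
    (hy : ∀ n, 0 ≤ y n) (hyU : ∀ n, |y n - 1| ≤ U) (hz : ∀ n, 0 ≤ z n) :
    ∑ m, |G a α y m - G a α z m| ≤
      a * (1 + α * U * Fintype.card ι) / (a + α) ^ 2 * ∑ m, |y m - z m| := by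
  have hS : |∑ n, y n - ∑ n, z n| ≤ ∑ m, |y m - z m| := by
    rw [← Finset.sum_sub_distrib]
    exact Finset.abs_sum_le_sum_abs _ _
  calc ∑ m, |G a α y m - G a α z m|
      ≤ ∑ m, a / (a + α) ^ 2 * (|y m - z m| + α * U * ∑ m, |y m - z m|) := by
        gcongr with m
        refine (abs_G_sub_G_le ha hα hc hy hz m).trans ?_
        have hU : 0 ≤ U := (abs_nonneg _).trans (hyU m)
        gcongr
        exact hyU m
    _ = _ := by
        rw [← Finset.mul_sum, Finset.sum_add_distrib, Finset.sum_const, Finset.card_univ,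
          nsmul_eq_mul]
        ring

theorem G_le (ha : 0 ≤ a) (hα : 0 < α) {U : ℝ} (hU : 1 ≤ U) (hy : ∀ n, 0 ≤ y n)
    (hyU : ∀ n, y n ≤ U) (m : ι) : G a α y m ≤ U := by
  have hS := Finset.sum_nonneg fun n (_ : n ∈ Finset.univ) => hy n
  rw [G, div_le_iff₀ (by positivity)]
  nlinarith [mul_le_mul_of_nonneg_left (hyU m) ha, mul_nonneg hα.le hS]

theorem expStep_le (ha : 0 ≤ a) (hα : 0 < α) {U : ℝ} (hU : 1 ≤ U) {w : ι → ℝ}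
    (hw0 : ∀ n, 0 ≤ w n) (hw1 : ∀ n, w n ≤ 1) (hy : ∀ n, 0 ≤ y n) (hyU : ∀ n, y n ≤ U)
    (m : ι) : expStep a α w y m ≤ U :=
  (mul_le_mul_of_nonneg_left (G_le ha hα hU hy hyU m) (hw0 m)).trans
    (mul_le_of_le_one_left (by linarith) (hw1 m))

theorem expStep_orbit_le (ha : 0 ≤ a) (hα : 0 < α) {U : ℝ} (hU : 1 ≤ U) {w : ι → ℝ}
    (hw0 : ∀ n, 0 ≤ w n) (hw1 : ∀ n, w n ≤ 1) {y : ℕ → ι → ℝ}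
    (hstep : ∀ i m, y (i + 1) m = expStep a α w (y i) m) (hy : ∀ i n, 0 ≤ y i n)
    (hy0 : ∀ n, y 0 n ≤ U) (i : ℕ) (m : ι) : y i m ≤ U := by
  induction i generalizing m with
  | zero => exact hy0 m
  | succ i ih => exact hstep i m ▸ expStep_le ha hα hU hw0 hw1 (hy i) ih m

theorem sum_abs_expStep_sub_le (ha : 0 ≤ a) (hα : 0 < α) (hc : a + α ≤ 1) {U E : ℝ}
    {w : ι → ℝ} (hwE : ∀ n, |w n| ≤ E) (hy : ∀ n, 0 ≤ y n) (hyU : ∀ n, |y n - 1| ≤ U)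
    (hz : ∀ n, 0 ≤ z n) :
    ∑ m, |expStep a α w y m - expStep a α w z m| ≤
      E * (a * (1 + α * U * Fintype.card ι) / (a + α) ^ 2) * ∑ m, |y m - z m| := by
  rcases isEmpty_or_nonempty ι with hι | ⟨⟨m₀⟩⟩
  · simp
  have hE : 0 ≤ E := (abs_nonneg _).trans (hwE m₀)
  calc ∑ m, |expStep a α w y m - expStep a α w z m|
      = ∑ m, |w m| * |G a α y m - G a α z m| :=
        Finset.sum_congr rfl fun m _ => by rw [expStep, expStep, ← mul_sub, abs_mul]
    _ ≤ E * ∑ m, |G a α y m - G a α z m| := by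
        rw [Finset.mul_sum]
        gcongr with m
        exact hwE m
    _ ≤ _ := by
        rw [mul_assoc]
        gcongr
        exact sum_abs_G_sub_G_le ha hα hc hy hyU hz

end abHMM

/-- Corollary 1, first part: with `d̲ = min_m d_m`,
`U = max{1, exp(x̂_{1,0}), …, exp(x̂_{N,0})}` and
`γ = ((1-αM)(1 + 2αU(M-1))/(1-αM+α)²)·exp(-β d̲)`, the reference dynamical system
satisfies `‖exp(x̂_i) - exp(x̂^∞)‖₁ ≤ γ ‖exp(x̂_{i-1}) - exp(x̂^∞)‖₁` for every `i ≥ 1`,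
where `exp` acts componentwise and `‖v‖₁ = Σ_m |v_m|`. -/
theorem abHMM_reference_system_L1_contraction (M : ℕ) (hM : 2 ≤ M) (α β : ℝ)
    (hα : 0 < α) (hα' : α < 1 / M) (hβ : 0 < β)
    (d : Fin (M - 1) → ℝ) (hd : ∀ m, 0 < d m)
    (xinf : Fin (M - 1) → ℝ) (hfix : xinf = fun m => abHMM.F α M xinf m - β * d m)
    (xh : ℕ → Fin (M - 1) → ℝ)
    (hrec : ∀ i : ℕ, xh (i + 1) = fun m => abHMM.F α M (xh i) m - β * d m)
    (dlow : ℝ) (hdlow : dlow = sInf (Set.range d))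
    (U : ℝ) (hU : U = max 1 (sSup (Set.range fun m => Real.exp (xh 0 m))))
    (γ : ℝ)
    (hγ : γ = (1 - α * M) * (1 + 2 * α * U * ((M : ℝ) - 1)) / (1 - α * M + α) ^ 2 *
      Real.exp (-(β * dlow))) :
    ∀ i : ℕ, ∑ m, |Real.exp (xh (i + 1) m) - Real.exp (xinf m)| ≤
      γ * ∑ m, |Real.exp (xh i m) - Real.exp (xinf m)| := by
  open abHMM Real in
  have hM1 : (1 : ℝ) ≤ M := by exact_mod_cast (by omega : 1 ≤ M)
  have ha : 0 < 1 - α * M := by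
    rw [lt_div_iff₀ (by positivity)] at hα'
    linarith
  have hc : 1 - α * M + α ≤ 1 := by nlinarith
  have hstep := fun i => exp_of_eq_F_sub hα ha.le (hrec i)
  have hfix' := exp_of_eq_F_sub hα ha.le hfix
  have hw1 : ∀ m, exp (-(β * d m)) ≤ 1 := fun m => exp_le_one_iff.mpr (by nlinarith [hd m])
  have hwE : ∀ m, |exp (-(β * d m))| ≤ exp (-(β * dlow)) := fun m => by
    have := hdlow ▸ csInf_le (Set.finite_range d).bddBelow ⟨m, rfl⟩
    rw [abs_exp]
    exact exp_le_exp.mpr (by nlinarith)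
  have hU1 : 1 ≤ U := hU ▸ le_max_left _ _
  have hbound := expStep_orbit_le (y := fun i n => exp (xh i n)) ha.le hα hU1
    (fun n => (exp_pos _).le) hw1 hstep (fun i n => (exp_pos _).le)
    fun m => hU ▸ le_max_of_le_right (le_csSup (Set.finite_range _).bddAbove ⟨m, rfl⟩)
  have hcard : (Fintype.card (Fin (M - 1)) : ℝ) = M - 1 := by
    rw [Fintype.card_fin, Nat.cast_sub (by omega), Nat.cast_one]
  intro i
  calc ∑ m, |exp (xh (i + 1) m) - exp (xinf m)|
      = ∑ m, |expStep (1 - α * M) α (fun n => exp (-(β * d n))) (fun n => exp (xh i n)) m -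
          expStep (1 - α * M) α (fun n => exp (-(β * d n))) (fun n => exp (xinf n)) m| :=
        Finset.sum_congr rfl fun m _ => by rw [hstep, hfix' m]
    _ ≤ exp (-(β * dlow)) * ((1 - α * M) * (1 + α * U * (M - 1)) / (1 - α * M + α) ^ 2) *
          ∑ m, |exp (xh i m) - exp (xinf m)| := by
        rw [← hcard]
        exact sum_abs_expStep_sub_le ha.le hα hc hwE (fun n => (exp_pos _).le)
          (fun n => abs_le.mpr ⟨by linarith [exp_pos (xh i n)], by linarith [hbound i n]⟩)
          (fun n => (exp_pos _).le)
    _ ≤ γ * ∑ m, |exp (xh i m) - exp (xinf m)| := by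
        rw [hγ, mul_comm (exp _)]
        gcongr
        linarith
end

section
/- Let 0 < α < 1/M, β > 0 and d ∈ ℝ^N with d_m > 0 for all m, and let x̂^∞ be the fixed point of the map x ↦ F(x) − β d. Set d̲ = min_{m=1,…,N} d_m and γ₁ = exp(−β d̲)·(1 − αM)/(1 − αM + α)². If the initial value satisfies x̂_0 ≥ x̂^∞ componentwise, then the reference dynamical system satisfies ‖exp(x̂_i) − exp(x̂^∞)‖₁ ≤ γ₁ · ‖exp(x̂_{i−1}) − exp(x̂^∞)‖₁ for every i ≥ 1, where exp is applied componentwise. -/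
/-!
In the coordinates `u = exp x` the system reads `u_{i+1} = e * G u_i`, where `e_m = exp(-β d_m) ≤ 1`
and `G = Fexp (1 - αM) α` is a quotient of affine functions of `u`. The fixed point `v = e * G v`
satisfies `v ≤ 1`, and on `{u | v ≤ u}` the map `G` is monotone, so `v ≤ u_i` for all `i`: every
difference `u_i - v` is nonnegative and the L¹ distances are plain sums. Because `a = 1 - αM` and
`M = N + 1`, `Σ_m (G u)_m` depends on `S = Σ_m u_m` only, through a Möbius transformation with
`Σ G u - Σ G v = a (S - T) / (D_S D_T)`, where `T = Σ_m v_m` and `D_S = a + α + α S ≥ a + α`.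
-/

open Finset Real

namespace abHMM

variable {ι : Type*} [Fintype ι] {a α : ℝ} {e u v : ι → ℝ}

/-- `F` in the coordinates `u = exp x`, with `a = 1 - αM` as a free parameter. -/
noncomputable def Fexp (a α : ℝ) (u : ι → ℝ) (m : ι) : ℝ :=
  (a * u m + α + α * ∑ n, u n) / (a + α + α * ∑ n, u n)

lemma exp_comp_F_sub {M : ℕ} (ha : 0 ≤ 1 - α * M) (hα : 0 < α) (x c : Fin (M - 1) → ℝ) :
    exp ∘ (fun m => F α M x m - c m) = (fun m => exp (-c m)) * Fexp (1 - α * M) α (exp ∘ x) := by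
  funext m
  have hS : 0 ≤ ∑ n, exp (x n) := sum_nonneg fun n _ => (exp_pos _).le
  have hnum : 0 < (1 - α * M) * exp (x m) + α + α * ∑ n, exp (x n) := by positivity
  have hden : 0 < 1 - α * M + α + α * ∑ n, exp (x n) := by positivity
  simp only [Function.comp_apply, Pi.mul_apply, F, Fexp, exp_sub, exp_neg,
    exp_log (div_pos hnum hden)]
  ring

lemma add_add_mul_sum_pos (ha : 0 ≤ a) (hα : 0 < α) (hu : 0 ≤ u) :
    0 < a + α + α * ∑ n, u n := by
  have : 0 ≤ ∑ n, u n := sum_nonneg fun n _ => hu n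
  positivity

lemma Fexp_le_Fexp (ha : 0 ≤ a) (hα : 0 < α) (hv : 0 ≤ v) (hv1 : v ≤ 1) (hvu : v ≤ u) :
    Fexp a α v ≤ Fexp a α u := by
  intro m
  have hDu := add_add_mul_sum_pos ha hα (hv.trans hvu)
  have hDv := add_add_mul_sum_pos ha hα hv
  have hST : ∑ n, v n ≤ ∑ n, u n := sum_le_sum fun n _ => hvu n
  have hvm : 0 ≤ 1 - v m := sub_nonneg.2 (hv1 m)
  have hdiff : 0 ≤ u m - v m := sub_nonneg.2 (hvu m)
  rw [Fexp, Fexp, div_le_div_iff₀ hDv hDu]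
  -- the cross difference is `a * (D_T * (u m - v m) + α * (1 - v m) * (S - T))`
  nlinarith [mul_nonneg ha (mul_nonneg hDv.le hdiff),
    mul_nonneg ha (mul_nonneg (mul_nonneg hα.le hvm) (sub_nonneg.2 hST))]

lemma le_mul_Fexp (ha : 0 ≤ a) (hα : 0 < α) (he : 0 ≤ e) (hv : 0 ≤ v) (hv1 : v ≤ 1)
    (hvu : v ≤ u) (hfix : v = e * Fexp a α v) : v ≤ e * Fexp a α u := fun m => by
  rw [hfix]
  exact mul_le_mul_of_nonneg_left (Fexp_le_Fexp ha hα hv hv1 hvu m) (he m)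

lemma sum_Fexp (u : ι → ℝ) :
    ∑ m, Fexp a α u m =
      (a * ∑ n, u n + Fintype.card ι * α * (1 + ∑ n, u n)) / (a + α + α * ∑ n, u n) := by
  simp only [Fexp, ← sum_div, sum_add_distrib, ← mul_sum, sum_const, card_univ, nsmul_eq_mul]
  ring

lemma sum_Fexp_sub_sum_Fexp (ha : 0 ≤ a) (hα : 0 < α)
    (hcard : a + α * (Fintype.card ι + 1) = 1) (hu : 0 ≤ u) (hv : 0 ≤ v) :
    ∑ m, Fexp a α u m - ∑ m, Fexp a α v m =
      a * (∑ n, u n - ∑ n, v n) /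
        ((a + α + α * ∑ n, u n) * (a + α + α * ∑ n, v n)) := by
  rw [sum_Fexp, sum_Fexp, div_sub_div _ _ (add_add_mul_sum_pos ha hα hu).ne'
    (add_add_mul_sum_pos ha hα hv).ne']
  congr 1
  linear_combination a * (∑ n, u n - ∑ n, v n) * hcard

lemma Fexp_nonneg (ha : 0 ≤ a) (hα : 0 < α) (hv : 0 ≤ v) (m : ι) : 0 ≤ Fexp a α v m := by
  have hT : 0 ≤ ∑ n, v n := sum_nonneg fun n _ => hv n
  have hvm : 0 ≤ v m := hv m
  exact div_nonneg (by positivity) (add_add_mul_sum_pos ha hα hv).le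

lemma le_one_of_eq_mul_Fexp (ha : 0 ≤ a) (hα : 0 < α) (he : e ≤ 1) (hv : 0 ≤ v)
    (hfix : v = e * Fexp a α v) : v ≤ 1 := by
  intro m
  have hD := add_add_mul_sum_pos ha hα hv
  have hT : 0 ≤ ∑ n, v n := sum_nonneg fun n _ => hv n
  have hle : v m ≤ Fexp a α v m :=
    (congrFun hfix m).trans_le (mul_le_of_le_one_left (Fexp_nonneg ha hα hv m) (he m))
  rw [Fexp, le_div_iff₀ hD] at hle
  have : α * (1 + ∑ n, v n) * v m ≤ α * (1 + ∑ n, v n) * 1 := by linarith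
  exact le_of_mul_le_mul_left this (mul_pos hα (by linarith))

lemma sum_abs_mul_Fexp_sub_le {E : ℝ} (ha : 0 ≤ a) (hα : 0 < α)
    (hcard : a + α * (Fintype.card ι + 1) = 1) (he : 0 ≤ e) (heE : ∀ m, e m ≤ E) (hE : 0 ≤ E)
    (hv : 0 ≤ v) (hv1 : v ≤ 1) (hvu : v ≤ u) (hfix : v = e * Fexp a α v) :
    ∑ m, |(e * Fexp a α u) m - v m| ≤ E * a / (a + α) ^ 2 * ∑ m, |u m - v m| := by
  have hu : 0 ≤ u := hv.trans hvu
  have hmono := Fexp_le_Fexp ha hα hv hv1 hvu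
  have hST : 0 ≤ ∑ n, u n - ∑ n, v n := sub_nonneg.2 (sum_le_sum fun n _ => hvu n)
  have hDD : (a + α) ^ 2 ≤ (a + α + α * ∑ n, u n) * (a + α + α * ∑ n, v n) := by
    have hS : 0 ≤ ∑ n, u n := sum_nonneg fun n _ => hu n
    have hT : 0 ≤ ∑ n, v n := sum_nonneg fun n _ => hv n
    rw [sq]
    exact mul_le_mul (le_add_of_nonneg_right (mul_nonneg hα.le hS))
      (le_add_of_nonneg_right (mul_nonneg hα.le hT)) (by positivity)
      (add_add_mul_sum_pos ha hα hu).le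
  have hdist : ∑ m, |u m - v m| = ∑ n, u n - ∑ n, v n := by
    rw [← sum_sub_distrib]
    exact sum_congr rfl fun m _ => abs_of_nonneg (sub_nonneg.2 (hvu m))
  calc ∑ m, |(e * Fexp a α u) m - v m|
      = ∑ m, e m * (Fexp a α u m - Fexp a α v m) := by
        conv_lhs => rw [hfix]
        refine sum_congr rfl fun m _ => ?_
        rw [Pi.mul_apply, Pi.mul_apply, ← mul_sub]
        exact abs_of_nonneg (mul_nonneg (he m) (sub_nonneg.2 (hmono m)))
    _ ≤ ∑ m, E * (Fexp a α u m - Fexp a α v m) :=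
        sum_le_sum fun m _ => mul_le_mul_of_nonneg_right (heE m) (sub_nonneg.2 (hmono m))
    _ = E * (a * (∑ n, u n - ∑ n, v n) /
          ((a + α + α * ∑ n, u n) * (a + α + α * ∑ n, v n))) := by
        rw [← mul_sum, sum_sub_distrib, sum_Fexp_sub_sum_Fexp ha hα hcard hu hv]
    _ ≤ E * (a * (∑ n, u n - ∑ n, v n) / (a + α) ^ 2) := by
        have : 0 < a + α := by positivity
        gcongr
    _ = E * a / (a + α) ^ 2 * ∑ m, |u m - v m| := by
        rw [hdist]
        ring

end abHMM

theorem abHMM_reference_system_L1_contraction_refined_general (M : ℕ) (α β : ℝ)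
    (hα : 0 < α) (hα' : α < 1 / M) (hβ : 0 < β)
    (d : Fin (M - 1) → ℝ) (hd : ∀ m, 0 < d m)
    (xinf : Fin (M - 1) → ℝ) (hfix : xinf = fun m => abHMM.F α M xinf m - β * d m)
    (xh : ℕ → Fin (M - 1) → ℝ)
    (hrec : ∀ i : ℕ, xh (i + 1) = fun m => abHMM.F α M (xh i) m - β * d m)
    (hinit : ∀ m, xinf m ≤ xh 0 m)
    (dlow : ℝ) (hdlow : dlow = sInf (Set.range d))
    (γ₁ : ℝ)
    (hγ₁ : γ₁ = Real.exp (-(β * dlow)) * (1 - α * M) / (1 - α * M + α) ^ 2) :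
    ∀ i : ℕ, ∑ m, |Real.exp (xh (i + 1) m) - Real.exp (xinf m)| ≤
      γ₁ * ∑ m, |Real.exp (xh i m) - Real.exp (xinf m)| := by
  -- `hα'` rules out `M = 0` because `1 / (0 : ℝ) = 0`
  have hM : 1 ≤ M := Nat.one_le_iff_ne_zero.2 fun h => by subst h; simp at hα'; linarith
  have ha : 0 ≤ 1 - α * M := sub_nonneg.2 ((lt_div_iff₀ (by exact_mod_cast hM)).1 hα').le
  have hcard : 1 - α * M + α * (Fintype.card (Fin (M - 1)) + 1) = 1 := by
    rw [Fintype.card_fin, Nat.cast_sub hM]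
    ring
  set e : Fin (M - 1) → ℝ := fun m => exp (-(β * d m))
  have he1 : e ≤ 1 := fun m => exp_le_one_iff.2 (neg_nonpos.2 (mul_pos hβ (hd m)).le)
  have heE : ∀ m, e m ≤ exp (-(β * dlow)) := fun m => exp_le_exp.2 <| neg_le_neg <|
    mul_le_mul_of_nonneg_left (hdlow ▸ csInf_le (Set.finite_range d).bddBelow ⟨m, rfl⟩) hβ.le
  have hstep : ∀ i, exp ∘ xh (i + 1) = e * abHMM.Fexp (1 - α * M) α (exp ∘ xh i) := fun i => by
    rw [hrec i]
    exact abHMM.exp_comp_F_sub ha hα (xh i) (fun m => β * d m)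
  have hfixv : exp ∘ xinf = e * abHMM.Fexp (1 - α * M) α (exp ∘ xinf) := by
    conv_lhs => rw [hfix]
    exact abHMM.exp_comp_F_sub ha hα xinf (fun m => β * d m)
  have hv : 0 ≤ exp ∘ xinf := fun _ => (exp_pos _).le
  have he : 0 ≤ e := fun _ => (exp_pos _).le
  have hv1 := abHMM.le_one_of_eq_mul_Fexp ha hα he1 hv hfixv
  have hle : ∀ i, exp ∘ xinf ≤ exp ∘ xh i := by
    intro i
    induction i with
    | zero => exact fun m => exp_le_exp.2 (hinit m)
    | succ i ih => exact hstep i ▸ abHMM.le_mul_Fexp ha hα he hv hv1 ih hfixv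
  intro i
  have key :=
    abHMM.sum_abs_mul_Fexp_sub_le ha hα hcard he heE (exp_pos _).le hv hv1 (hle i) hfixv
  rw [← hstep i, ← hγ₁] at key
  exact key

/-- Corollary 1, second part: with `d̲ = min_m d_m` and
`γ₁ = exp(-β d̲)(1-αM)/(1-αM+α)²`, if the initial value satisfies `x̂_0 ≥ x̂^∞`
componentwise, then the reference dynamical system satisfies
`‖exp(x̂_i) - exp(x̂^∞)‖₁ ≤ γ₁ ‖exp(x̂_{i-1}) - exp(x̂^∞)‖₁` for every `i ≥ 1`,
where `exp` acts componentwise and `‖v‖₁ = Σ_m |v_m|`. -/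
theorem abHMM_reference_system_L1_contraction_refined (M : ℕ) (hM : 2 ≤ M) (α β : ℝ)
    (hα : 0 < α) (hα' : α < 1 / M) (hβ : 0 < β)
    (d : Fin (M - 1) → ℝ) (hd : ∀ m, 0 < d m)
    (xinf : Fin (M - 1) → ℝ) (hfix : xinf = fun m => abHMM.F α M xinf m - β * d m)
    (xh : ℕ → Fin (M - 1) → ℝ)
    (hrec : ∀ i : ℕ, xh (i + 1) = fun m => abHMM.F α M (xh i) m - β * d m)
    (hinit : ∀ m, xinf m ≤ xh 0 m)
    (dlow : ℝ) (hdlow : dlow = sInf (Set.range d))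
    (γ₁ : ℝ)
    (hγ₁ : γ₁ = Real.exp (-(β * dlow)) * (1 - α * M) / (1 - α * M + α) ^ 2) :
    ∀ i : ℕ, ∑ m, |Real.exp (xh (i + 1) m) - Real.exp (xinf m)| ≤
      γ₁ * ∑ m, |Real.exp (xh i m) - Real.exp (xinf m)| :=
  abHMM_reference_system_L1_contraction_refined_general M α β hα hα' hβ d hd xinf hfix xh hrec hinit
    dlow hdlow γ₁ hγ₁
end

section
/- Let 0 < α < 1/M, β > 0 and d ∈ ℝ^N with d_m > 0 for all m, let x̂^∞ be the fixed point of the map x ↦ F(x) − β d, and define μ̂₀^∞ = 1/(1 + Σ_{m=1}^N exp(x̂_m^∞)). With d̲ = min_{m=1,…,N} d_m, the steady-state belief on the true state satisfies the lower bound μ̂₀^∞ ≥ ( (1 − αM)·exp(β d̲) − 1 + α ) / ( (1 − αM)·(exp(β d̲) − 1) ). -/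
/-!
Write `c = 1 - αM`, `S = Σₙ exp xₙ` and `t = α (1 + S)`. Exponentiating the fixed-point equation
gives `exp xₘ · exp (β dₘ) · (c + t) = c exp xₘ + t`, i.e.
`c exp xₘ (exp (β dₘ) - 1) = t (1 - exp xₘ exp (β dₘ)) ≤ t`.
Bounding `exp (β dₘ)` below by `exp (β d̲)` and summing over the `M - 1` components gives
`c S (exp (β d̲) - 1) ≤ (M - 1) α (1 + S)`, which rearranges to the claimed bound on `1 / (1 + S)`.
-/

open Real

/-- `E = 1` is the junk case `x / 0 = 0` of the left-hand side. -/
lemma div_le_one_div_one_add_of_mul_le {α M E S : ℝ} (hc : 0 < 1 - α * M) (hS : 0 ≤ S)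
    (hE : 1 ≤ E) (h : (1 - α * M) * S * (E - 1) ≤ (M - 1) * (α * (1 + S))) :
    ((1 - α * M) * E - 1 + α) / ((1 - α * M) * (E - 1)) ≤ 1 / (1 + S) := by
  rcases hE.eq_or_lt with rfl | hE
  · simp only [sub_self, mul_zero, div_zero]
    positivity
  rw [div_le_div_iff₀ (by nlinarith) (by linarith)]
  linear_combination h

namespace abHMM

variable {α : ℝ} {M : ℕ} {x b : Fin (M - 1) → ℝ}

lemma exp_mul_exp_eq_of_eq_F_sub (hc : 0 < 1 - α * M) (hα : 0 ≤ α)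
    (hfix : x = fun m => F α M x m - b m) (m : Fin (M - 1)) :
    exp (x m) * exp (b m) * (1 - α * M + α * (1 + ∑ n, exp (x n))) =
      (1 - α * M) * exp (x m) + α * (1 + ∑ n, exp (x n)) := by
  have ht : 0 ≤ α * (1 + ∑ n, exp (x n)) := by positivity
  have hden : 0 < 1 - α * M + α * (1 + ∑ n, exp (x n)) := by linarith
  have hnum : 0 < (1 - α * M) * exp (x m) + α * (1 + ∑ n, exp (x n)) :=
    add_pos_of_pos_of_nonneg (mul_pos hc (exp_pos _)) ht
  have hx : x m + b m = F α M x m := by linarith [congrFun hfix m]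
  have hF : F α M x m = log (((1 - α * M) * exp (x m) + α * (1 + ∑ n, exp (x n))) /
      (1 - α * M + α * (1 + ∑ n, exp (x n)))) := by
    simp only [F, mul_add, mul_one, add_assoc]
  have hexp : exp (x m) * exp (b m) = ((1 - α * M) * exp (x m) + α * (1 + ∑ n, exp (x n))) /
      (1 - α * M + α * (1 + ∑ n, exp (x n))) := by
    rw [← exp_add, hx, hF, exp_log (div_pos hnum hden)]
  rw [hexp, div_mul_cancel₀ _ hden.ne']

lemma mul_exp_mul_exp_sub_one_le (hc : 0 < 1 - α * M) (hα : 0 ≤ α)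
    (hfix : x = fun m => F α M x m - b m) (m : Fin (M - 1)) :
    (1 - α * M) * exp (x m) * (exp (b m) - 1) ≤ α * (1 + ∑ n, exp (x n)) := by
  have hrest : 0 ≤ α * (1 + ∑ n, exp (x n)) * exp (x m) * exp (b m) := by positivity
  linear_combination exp_mul_exp_eq_of_eq_F_sub hc hα hfix m + hrest

lemma mul_sum_exp_mul_exp_sub_one_le {β dlow : ℝ} {d : Fin (M - 1) → ℝ}
    (hc : 0 < 1 - α * M) (hα : 0 ≤ α) (hβ : 0 ≤ β) (hdlow : ∀ m, dlow ≤ d m)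
    (hfix : x = fun m => F α M x m - β * d m) :
    (1 - α * M) * (∑ m, exp (x m)) * (exp (β * dlow) - 1) ≤
      ((M - 1 : ℕ) : ℝ) * (α * (1 + ∑ n, exp (x n))) := by
  calc (1 - α * M) * (∑ m, exp (x m)) * (exp (β * dlow) - 1)
      = ∑ m, (1 - α * M) * exp (x m) * (exp (β * dlow) - 1) := by
        rw [Finset.mul_sum, Finset.sum_mul]
    _ ≤ ∑ m, (1 - α * M) * exp (x m) * (exp (β * d m) - 1) := by
        gcongr with m
        exact hdlow m
    _ ≤ ∑ _m : Fin (M - 1), α * (1 + ∑ n, exp (x n)) :=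
        Finset.sum_le_sum fun m _ => mul_exp_mul_exp_sub_one_le hc hα hfix m
    _ = ((M - 1 : ℕ) : ℝ) * (α * (1 + ∑ n, exp (x n))) := by
        rw [Finset.sum_const, Finset.card_univ, Fintype.card_fin, nsmul_eq_mul]

end abHMM

theorem abHMM_steady_state_belief_lower_bound_general (M : ℕ) (α β : ℝ)
    (hα : 0 < α) (hα' : α < 1 / M) (hβ : 0 < β)
    (d : Fin (M - 1) → ℝ) (hd : ∀ m, 0 < d m)
    (xinf : Fin (M - 1) → ℝ) (hfix : xinf = fun m => abHMM.F α M xinf m - β * d m)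
    (dlow : ℝ) (hdlow : dlow = sInf (Set.range d))
    (μ₀ : ℝ) (hμ₀ : μ₀ = 1 / (1 + ∑ m, Real.exp (xinf m))) :
    ((1 - α * M) * Real.exp (β * dlow) - 1 + α) /
      ((1 - α * M) * (Real.exp (β * dlow) - 1)) ≤ μ₀ := by
  have hM : 1 ≤ M := by
    by_contra! h
    rw [Nat.lt_one_iff.mp h, Nat.cast_zero, div_zero] at hα'
    linarith
  have hc : 0 < 1 - α * M := by
    have := (lt_div_iff₀ (by exact_mod_cast hM)).mp hα'
    linarith
  have hdlow_le : ∀ m, dlow ≤ d m := fun m => by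
    rw [hdlow]
    exact csInf_le (Set.finite_range d).bddBelow ⟨m, rfl⟩
  have hdlow_nonneg : 0 ≤ dlow := by
    rw [hdlow]
    exact Real.sInf_nonneg (by rintro _ ⟨m, rfl⟩; exact (hd m).le)
  have hsum := abHMM.mul_sum_exp_mul_exp_sub_one_le hc hα.le hβ.le hdlow_le hfix
  rw [Nat.cast_sub hM, Nat.cast_one] at hsum
  rw [hμ₀]
  exact div_le_one_div_one_add_of_mul_le hc (Finset.sum_nonneg fun m _ => (exp_pos _).le)
    (one_le_exp (mul_nonneg hβ.le hdlow_nonneg)) hsum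

/-- Theorem 2, lower bound: with `d̲ = min_m d_m`, the steady-state belief
`μ̂₀^∞ = 1/(1 + Σ_m exp(x̂_m^∞))` on the true state satisfies
`μ̂₀^∞ ≥ ((1-αM)·exp(β d̲) - 1 + α)/((1-αM)·(exp(β d̲) - 1))`. -/
theorem abHMM_steady_state_belief_lower_bound (M : ℕ) (hM : 2 ≤ M) (α β : ℝ)
    (hα : 0 < α) (hα' : α < 1 / M) (hβ : 0 < β)
    (d : Fin (M - 1) → ℝ) (hd : ∀ m, 0 < d m)
    (xinf : Fin (M - 1) → ℝ) (hfix : xinf = fun m => abHMM.F α M xinf m - β * d m)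
    (dlow : ℝ) (hdlow : dlow = sInf (Set.range d))
    (μ₀ : ℝ) (hμ₀ : μ₀ = 1 / (1 + ∑ m, Real.exp (xinf m))) :
    ((1 - α * M) * Real.exp (β * dlow) - 1 + α) /
      ((1 - α * M) * (Real.exp (β * dlow) - 1)) ≤ μ₀ :=
  abHMM_steady_state_belief_lower_bound_general M α β hα hα' hβ d hd xinf hfix dlow hdlow μ₀ hμ₀
end

section
/- Let 0 < α < 1/M. Then F(0) = 0, F is differentiable at the origin, and its Fréchet derivative at 0 ∈ ℝ^N is (1 − αM) times the identity map on ℝ^N; equivalently, ∂F_m/∂x_m(0) = 1 − αM for every m and ∂F_m/∂x_n(0) = 0 for every n ≠ m. -/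
open Real ContinuousLinearMap

theorem HasFDerivAt.log_div {E : Type*} [NormedAddCommGroup E] [NormedSpace ℝ E]
    {g h : E → ℝ} {g' h' : E →L[ℝ] ℝ} {x : E} (hg : HasFDerivAt g g' x)
    (hh : HasFDerivAt h h' x) (hgx : g x ≠ 0) (hhx : h x ≠ 0) :
    HasFDerivAt (fun y => Real.log (g y / h y)) ((g x)⁻¹ • g' - (h x)⁻¹ • h') x := by
  have hne : ∀ᶠ y in nhds x, g y ≠ 0 ∧ h y ≠ 0 :=
    (hg.continuousAt.eventually_ne hgx).and (hh.continuousAt.eventually_ne hhx)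
  refine ((hg.log hgx).sub (hh.log hhx)).congr_of_eventuallyEq ?_
  filter_upwards [hne] with y hy using Real.log_div hy.1 hy.2

theorem hasFDerivAt_sum_exp {ι : Type*} [Fintype ι] (x : ι → ℝ) :
    HasFDerivAt (fun y : ι → ℝ => ∑ n, exp (y n)) (∑ n, exp (x n) • (proj n : (ι → ℝ) →L[ℝ] ℝ))
      x :=
  HasFDerivAt.fun_sum fun n _ => (hasFDerivAt_apply (𝕜 := ℝ) n x).exp

theorem hasFDerivAt_log_ratio_sum_exp_zero {ι : Type*} [Fintype ι] (a b c : ℝ) (m : ι)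
    (hne : a + b + c * Fintype.card ι ≠ 0) :
    HasFDerivAt
      (fun x : ι → ℝ =>
        log ((a * exp (x m) + b + c * ∑ n, exp (x n)) / (a + b + c * ∑ n, exp (x n))))
      ((a + b + c * Fintype.card ι)⁻¹ • a • (proj m : (ι → ℝ) →L[ℝ] ℝ)) 0 := by
  set S' : (ι → ℝ) →L[ℝ] ℝ := ∑ n, proj n
  have hS : HasFDerivAt (fun x : ι → ℝ => ∑ n, exp (x n)) S' 0 := by
    simpa using hasFDerivAt_sum_exp (0 : ι → ℝ)
  have hnum : HasFDerivAt (fun x : ι → ℝ => a * exp (x m) + b + c * ∑ n, exp (x n))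
      (a • proj m + c • S') 0 := by
    simpa using (((hasFDerivAt_apply (𝕜 := ℝ) m 0).exp.const_mul a).add_const b).fun_add
      (hS.const_mul c)
  have hden : HasFDerivAt (fun x : ι → ℝ => a + b + c * ∑ n, exp (x n)) (c • S') 0 :=
    (hS.const_mul c).const_add (a + b)
  have hsum : ∑ n, exp ((0 : ι → ℝ) n) = Fintype.card ι := by simp
  have hnum0 : a * exp ((0 : ι → ℝ) m) + b + c * ∑ n, exp ((0 : ι → ℝ) n) =
      a + b + c * Fintype.card ι := by
    simp
  refine (hnum.log_div hden (by rwa [hnum0]) (by rwa [hsum])).congr_fderiv ?_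
  rw [hnum0, hsum, smul_add, add_sub_cancel_right]

theorem abHMM_F_derivative_at_origin_general (M : ℕ) (hM : 2 ≤ M) (α : ℝ) :
    abHMM.F α M (0 : Fin (M - 1) → ℝ) = 0 ∧
      HasFDerivAt (abHMM.F α M)
        ((1 - α * M) • ContinuousLinearMap.id ℝ (Fin (M - 1) → ℝ))
        (0 : Fin (M - 1) → ℝ) := by
  have hweight : 1 - α * M + α + α * Fintype.card (Fin (M - 1)) = 1 := by
    rw [Fintype.card_fin, Nat.cast_sub (by omega)]
    ring
  refine ⟨funext fun m => by simp [abHMM.F], hasFDerivAt_pi'.2 fun m => ?_⟩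
  refine (hasFDerivAt_log_ratio_sum_exp_zero (1 - α * M) α α m
    (by rw [hweight]; exact one_ne_zero)).congr_fderiv ?_
  rw [hweight, inv_one, one_smul]
  ext x
  simp

/-- Remark 1: for `0 < α < 1/M`, `F(0) = 0` and `F` is differentiable at
the origin with Fréchet derivative `(1 - αM)` times the identity map on `ℝ^N`
(equivalently, `∂F_m/∂x_m(0) = 1 - αM` and `∂F_m/∂x_n(0) = 0` for `n ≠ m`). -/
theorem abHMM_F_derivative_at_origin (M : ℕ) (hM : 2 ≤ M) (α : ℝ)
    (hα : 0 < α) (hα' : α < 1 / M) :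
    abHMM.F α M (0 : Fin (M - 1) → ℝ) = 0 ∧
      HasFDerivAt (abHMM.F α M)
        ((1 - α * M) • ContinuousLinearMap.id ℝ (Fin (M - 1) → ℝ))
        (0 : Fin (M - 1) → ℝ) :=
  abHMM_F_derivative_at_origin_general M hM α
end
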